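/- Assume g₂ + 1 > 0 and set b := (0,0,0,0,1) and f₀ := (1−g₁)b + ⟨b, p₀⟩(p₀ + p₁). Then ⟨f₀, p₀⟩ = ⟨f₀, p₁⟩ = 0, ⟨f₀, f₀⟩ = (1−g₁)² + 2(1−g₁)⟨b, p₀⟩², which is positive whenever g₁ < 1, and (rσ)f₀ = f₀. -/
import Mathlib

open Real Matrix

/-- The bilinear form of signature (−−−−+) on ℝ⁵. -/
noncomputable def B5 (x y : Fin 5 → ℝ) : ℝ :=
  -(x 0 * y 0) - x 1 * y 1 - x 2 * y 2 - x 3 * y 3 + x 4 * y 4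

/-- cᵢ = cos(2iπ/n). -/
noncomputable def cc (n : ℕ) (i : ℤ) : ℝ := Real.cos (2 * i * π / n)

/-- sᵢ = sin(2iπ/n). -/
noncomputable def ss (n : ℕ) (i : ℤ) : ℝ := Real.sin (2 * i * π / n)

/-- pᵢ = (cᵢ√x₁, sᵢ√x₁, c_{mi}√x₂, s_{mi}√x₂, √(x₁+x₂−1)) ∈ ℝ⁵. -/
noncomputable def pp (n m : ℕ) (x₁ x₂ : ℝ) (i : ℤ) : Fin 5 → ℝ :=
  ![cc n i * Real.sqrt x₁, ss n i * Real.sqrt x₁,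
    cc n (m * i) * Real.sqrt x₂, ss n (m * i) * Real.sqrt x₂,
    Real.sqrt (x₁ + x₂ - 1)]

/-- gᵢ = ⟨p₀, pᵢ⟩. -/
noncomputable def gg (n m : ℕ) (x₁ x₂ : ℝ) (i : ℤ) : ℝ :=
  B5 (pp n m x₁ x₂ 0) (pp n m x₁ x₂ i)

/-- The block-diagonal matrix with rotation blocks by 2π/n and 2πm/n and a final 1. -/
noncomputable def rot (n m : ℕ) : Matrix (Fin 5) (Fin 5) ℝ :=
  !![Real.cos (2*π/n), -Real.sin (2*π/n), 0, 0, 0;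
     Real.sin (2*π/n),  Real.cos (2*π/n), 0, 0, 0;
     0, 0, Real.cos (2*π*m/n), -Real.sin (2*π*m/n), 0;
     0, 0, Real.sin (2*π*m/n),  Real.cos (2*π*m/n), 0;
     0, 0, 0, 0, 1]

/-- The reflection σ in the middle slice M₀:
    σ(v) = v + 2⟨v,p₀⟩p₀ + (⟨v, p₁ − p_{n−1}⟩/(g₂+1))(p₁ − p_{n−1}). -/
noncomputable def sig (n m : ℕ) (x₁ x₂ : ℝ) (v : Fin 5 → ℝ) : Fin 5 → ℝ :=
  v + (2 * B5 v (pp n m x₁ x₂ 0)) • pp n m x₁ x₂ 0 +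
    (B5 v (pp n m x₁ x₂ 1 - pp n m x₁ x₂ ((n : ℤ) - 1)) / (gg n m x₁ x₂ 2 + 1)) •
      (pp n m x₁ x₂ 1 - pp n m x₁ x₂ ((n : ℤ) - 1))

/-- The composition rσ. -/
noncomputable def rsig (n m : ℕ) (x₁ x₂ : ℝ) (v : Fin 5 → ℝ) : Fin 5 → ℝ :=
  (rot n m).mulVec (sig n m x₁ x₂ v)

/- ## Auxiliary lemmas -/

lemma aux_B5_add_left (x y z : Fin 5 → ℝ) : B5 (x + y) z = B5 x z + B5 y z := by
  simp only [B5, Pi.add_apply]; ring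

lemma aux_B5_smul_left (a : ℝ) (x y : Fin 5 → ℝ) : B5 (a • x) y = a * B5 x y := by
  simp only [B5, Pi.smul_apply, smul_eq_mul]; ring

lemma aux_B5_add_right (x y z : Fin 5 → ℝ) : B5 x (y + z) = B5 x y + B5 x z := by
  simp only [B5, Pi.add_apply]; ring

lemma aux_B5_smul_right (a : ℝ) (x y : Fin 5 → ℝ) : B5 x (a • y) = a * B5 x y := by
  simp only [B5, Pi.smul_apply, smul_eq_mul]; ring

lemma aux_B5_sub_right (x y z : Fin 5 → ℝ) : B5 x (y - z) = B5 x y - B5 x z := by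
  simp only [B5, Pi.sub_apply]; ring

lemma aux_B5_comm (x y : Fin 5 → ℝ) : B5 x y = B5 y x := by
  simp only [B5]; ring

lemma aux_cc_zero (n : ℕ) : cc n 0 = 1 := by simp [cc]
lemma aux_ss_zero (n : ℕ) : ss n 0 = 0 := by simp [ss]

lemma aux_cs (n : ℕ) (i : ℤ) : cc n i ^ 2 + ss n i ^ 2 = 1 := by
  unfold cc ss; rw [add_comm]; exact Real.sin_sq_add_cos_sq _

lemma aux_cc_n_sub_one (n : ℕ) (hn : 0 < n) : cc n ((n:ℤ) - 1) = cc n 1 := by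
  have hn0 : (n:ℝ) ≠ 0 := by positivity
  unfold cc
  have h : 2 * (((n:ℤ) - 1 : ℤ) : ℝ) * π / n = (1:ℤ) * (2 * π) - 2 * (1:ℤ) * π / n := by
    push_cast; field_simp
  rw [h, Real.cos_int_mul_two_pi_sub]

lemma aux_ss_n_sub_one (n : ℕ) (hn : 0 < n) : ss n ((n:ℤ) - 1) = -ss n 1 := by
  have hn0 : (n:ℝ) ≠ 0 := by positivity
  unfold ss
  have h : 2 * (((n:ℤ) - 1 : ℤ) : ℝ) * π / n = (1:ℤ) * (2 * π) - 2 * (1:ℤ) * π / n := by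
    push_cast; field_simp
  rw [h, Real.sin_int_mul_two_pi_sub]

lemma aux_cc_mn_sub_one (n m : ℕ) (hn : 0 < n) : cc n ((m:ℤ) * ((n:ℤ) - 1)) = cc n m := by
  have hn0 : (n:ℝ) ≠ 0 := by positivity
  unfold cc
  have h : 2 * (((m:ℤ) * ((n:ℤ) - 1) : ℤ) : ℝ) * π / n = (m:ℤ) * (2 * π) - 2 * (m:ℤ) * π / n := by
    push_cast; field_simp
  rw [h, Real.cos_int_mul_two_pi_sub]

lemma aux_ss_mn_sub_one (n m : ℕ) (hn : 0 < n) : ss n ((m:ℤ) * ((n:ℤ) - 1)) = -ss n m := by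
  have hn0 : (n:ℝ) ≠ 0 := by positivity
  unfold ss
  have h : 2 * (((m:ℤ) * ((n:ℤ) - 1) : ℤ) : ℝ) * π / n = (m:ℤ) * (2 * π) - 2 * (m:ℤ) * π / n := by
    push_cast; field_simp
  rw [h, Real.sin_int_mul_two_pi_sub]

lemma aux_pp_n (n m : ℕ) (hn : 0 < n) (x₁ x₂ : ℝ) :
    pp n m x₁ x₂ (n:ℤ) = pp n m x₁ x₂ 0 := by
  have hn0 : (n:ℝ) ≠ 0 := by positivity
  unfold pp cc ss
  have h1 : 2 * ((n:ℤ):ℝ) * π / n = (1:ℤ) * (2 * π) := by push_cast; field_simp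
  have h2 : 2 * (((m:ℤ) * (n:ℤ) : ℤ):ℝ) * π / n = (m:ℤ) * (2 * π) := by
    push_cast; field_simp
  have h3 : 2 * ((0:ℤ):ℝ) * π / n = 0 := by norm_num
  have h4 : ((m:ℤ) * 0 : ℤ) = 0 := by ring
  rw [h4, h1, h2, h3, Real.cos_int_mul_two_pi, Real.cos_int_mul_two_pi]
  have hs1 : Real.sin ((1:ℤ) * (2*π)) = 0 := by
    have := Real.sin_int_mul_two_pi_sub 0 1; simpa using this
  have hs2 : Real.sin ((m:ℤ) * (2*π)) = 0 := by
    have := Real.sin_int_mul_two_pi_sub 0 (m:ℤ); simpa using this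
  rw [hs1, hs2]; norm_num

lemma aux_cos_double (x : ℝ) : Real.cos (2 * x) = Real.cos x ^ 2 - Real.sin x ^ 2 := by
  rw [Real.cos_two_mul]; nlinarith [Real.sin_sq_add_cos_sq x]

lemma aux_cc_two (n : ℕ) : cc n 2 = cc n 1 ^ 2 - ss n 1 ^ 2 := by
  unfold cc ss
  have h : 2 * ((2:ℤ):ℝ) * π / n = 2 * (2 * ((1:ℤ):ℝ) * π / n) := by push_cast; ring
  rw [h, aux_cos_double]

lemma aux_cc_two_m (n m : ℕ) : cc n ((m:ℤ) * 2) = cc n m ^ 2 - ss n m ^ 2 := by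
  unfold cc ss
  have h : 2 * (((m:ℤ) * 2 : ℤ):ℝ) * π / n = 2 * (2 * ((m:ℤ):ℝ) * π / n) := by push_cast; ring
  rw [h, aux_cos_double]

lemma aux_cc_add_one (n : ℕ) (i : ℤ) :
    cc n (i + 1) = Real.cos (2*π/n) * cc n i - Real.sin (2*π/n) * ss n i := by
  unfold cc ss
  have h : 2 * ((i + 1 : ℤ) : ℝ) * π / n = 2*π/(n:ℝ) + 2 * (i:ℝ) * π / n := by
    push_cast; ring
  rw [h, Real.cos_add]

lemma aux_ss_add_one (n : ℕ) (i : ℤ) :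
    ss n (i + 1) = Real.sin (2*π/n) * cc n i + Real.cos (2*π/n) * ss n i := by
  unfold cc ss
  have h : 2 * ((i + 1 : ℤ) : ℝ) * π / n = 2*π/(n:ℝ) + 2 * (i:ℝ) * π / n := by
    push_cast; ring
  rw [h, Real.sin_add]

lemma aux_cc_m_add_one (n m : ℕ) (i : ℤ) :
    cc n ((m:ℤ) * (i + 1)) =
      Real.cos (2*π*m/n) * cc n ((m:ℤ)*i) - Real.sin (2*π*m/n) * ss n ((m:ℤ)*i) := by
  unfold cc ss
  have h : 2 * (((m:ℤ) * (i + 1) : ℤ) : ℝ) * π / n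
      = 2*π*(m:ℝ)/(n:ℝ) + 2 * (((m:ℤ)*i : ℤ):ℝ) * π / n := by
    push_cast; ring
  rw [h, Real.cos_add]

lemma aux_ss_m_add_one (n m : ℕ) (i : ℤ) :
    ss n ((m:ℤ) * (i + 1)) =
      Real.sin (2*π*m/n) * cc n ((m:ℤ)*i) + Real.cos (2*π*m/n) * ss n ((m:ℤ)*i) := by
  unfold cc ss
  have h : 2 * (((m:ℤ) * (i + 1) : ℤ) : ℝ) * π / n
      = 2*π*(m:ℝ)/(n:ℝ) + 2 * (((m:ℤ)*i : ℤ):ℝ) * π / n := by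
    push_cast; ring
  rw [h, Real.sin_add]

lemma aux_rot_pp (n m : ℕ) (x₁ x₂ : ℝ) (i : ℤ) :
    (rot n m).mulVec (pp n m x₁ x₂ i) = pp n m x₁ x₂ (i + 1) := by
  funext j
  fin_cases j <;>
    simp [rot, pp, Matrix.mulVec, dotProduct, Fin.sum_univ_five,
      aux_cc_add_one, aux_ss_add_one, aux_cc_m_add_one, aux_ss_m_add_one] <;> ring

lemma aux_rot_b (n m : ℕ) :
    (rot n m).mulVec ![0,0,0,0,1] = ![0,0,0,0,1] := by
  funext j
  fin_cases j <;>
    simp [rot, Matrix.mulVec, dotProduct, Fin.sum_univ_five]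

lemma aux_B5_pp (n m : ℕ) (x₁ x₂ : ℝ) (hx₁ : 0 ≤ x₁) (hx₂ : 0 ≤ x₂)
    (hx : 1 ≤ x₁ + x₂) (i j : ℤ) :
    B5 (pp n m x₁ x₂ i) (pp n m x₁ x₂ j) =
      -((cc n i * cc n j + ss n i * ss n j) * x₁)
      - (cc n ((m:ℤ)*i) * cc n ((m:ℤ)*j) + ss n ((m:ℤ)*i) * ss n ((m:ℤ)*j)) * x₂
      + (x₁ + x₂ - 1) := by
  have h1 : Real.sqrt x₁ * Real.sqrt x₁ = x₁ := Real.mul_self_sqrt hx₁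
  have h2 : Real.sqrt x₂ * Real.sqrt x₂ = x₂ := Real.mul_self_sqrt hx₂
  have h3 : Real.sqrt (x₁ + x₂ - 1) * Real.sqrt (x₁ + x₂ - 1) = x₁ + x₂ - 1 :=
    Real.mul_self_sqrt (by linarith)
  simp only [B5, pp, Matrix.cons_val_zero, Matrix.cons_val_one, Matrix.head_cons,
    Matrix.cons_val_two, Matrix.tail_cons, Matrix.cons_val_three, Matrix.cons_val_four]
  linear_combination (-(cc n i * cc n j + ss n i * ss n j)) * h1
    + (-(cc n ((m:ℤ)*i) * cc n ((m:ℤ)*j) + ss n ((m:ℤ)*i) * ss n ((m:ℤ)*j))) * h2 + h3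

lemma aux_B5_b_pp (n m : ℕ) (x₁ x₂ : ℝ) (i : ℤ) :
    B5 ![0,0,0,0,1] (pp n m x₁ x₂ i) = Real.sqrt (x₁ + x₂ - 1) := by
  simp [B5, pp]

theorem stmt8 (n m : ℕ) (hn : Even n) (hn6 : 6 ≤ n) (hm1 : 1 < m) (hm2 : 2 * m < n)
    (x₁ x₂ : ℝ) (hx₁ : 0 < x₁) (hx₂ : 0 ≤ x₂) (hx : 1 < x₁ + x₂)
    (hg : 0 < gg n m x₁ x₂ 2 + 1)
    (b : Fin 5 → ℝ) (hb : b = ![0, 0, 0, 0, 1])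
    (f₀ : Fin 5 → ℝ)
    (hf₀ : f₀ = (1 - gg n m x₁ x₂ 1) • b +
      (B5 b (pp n m x₁ x₂ 0)) • (pp n m x₁ x₂ 0 + pp n m x₁ x₂ 1)) :
    B5 f₀ (pp n m x₁ x₂ 0) = 0 ∧
    B5 f₀ (pp n m x₁ x₂ 1) = 0 ∧
    B5 f₀ f₀ = (1 - gg n m x₁ x₂ 1) ^ 2 +
      2 * (1 - gg n m x₁ x₂ 1) * (B5 b (pp n m x₁ x₂ 0)) ^ 2 ∧
    (gg n m x₁ x₂ 1 < 1 → 0 < B5 f₀ f₀) ∧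
    rsig n m x₁ x₂ f₀ = f₀ := by
  have hnpos : 0 < n := by omega
  have hT0 : (0:ℝ) < x₁ + x₂ - 1 := by linarith
  have hB := aux_B5_pp n m x₁ x₂ hx₁.le hx₂ hx.le
  have ht2 : Real.sqrt (x₁ + x₂ - 1) ^ 2 = x₁ + x₂ - 1 := Real.sq_sqrt hT0.le
  have hbp : ∀ i : ℤ, B5 b (pp n m x₁ x₂ i) = Real.sqrt (x₁ + x₂ - 1) := by
    intro i; rw [hb]; exact aux_B5_b_pp n m x₁ x₂ i
  have hbb : B5 b b = 1 := by rw [hb]; simp [B5]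
  have hself : ∀ i : ℤ, B5 (pp n m x₁ x₂ i) (pp n m x₁ x₂ i) = -1 := by
    intro i
    rw [hB i i]
    have := aux_cs n i
    have := aux_cs n ((m:ℤ)*i)
    nlinarith
  have hg1 : gg n m x₁ x₂ 1 = -(cc n 1 * x₁) - cc n m * x₂ + (x₁ + x₂ - 1) := by
    rw [gg, hB 0 1]
    simp [aux_cc_zero, aux_ss_zero]
  have hg2 : gg n m x₁ x₂ 2 = -(cc n 2 * x₁) - cc n ((m:ℤ)*2) * x₂ + (x₁ + x₂ - 1) := by
    rw [gg, hB 0 2]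
    simp [aux_cc_zero, aux_ss_zero]
  have e01 : B5 (pp n m x₁ x₂ 0) (pp n m x₁ x₂ 1) = gg n m x₁ x₂ 1 := rfl
  have e0n : B5 (pp n m x₁ x₂ 0) (pp n m x₁ x₂ ((n:ℤ)-1)) = gg n m x₁ x₂ 1 := by
    rw [hB 0 ((n:ℤ)-1), hg1,
      aux_cc_n_sub_one n hnpos, aux_ss_n_sub_one n hnpos,
      aux_cc_mn_sub_one n m hnpos, aux_ss_mn_sub_one n m hnpos]
    simp [aux_cc_zero, aux_ss_zero]
  have e1n : B5 (pp n m x₁ x₂ 1) (pp n m x₁ x₂ ((n:ℤ)-1)) = gg n m x₁ x₂ 2 := by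
    rw [hB 1 ((n:ℤ)-1), hg2,
      aux_cc_n_sub_one n hnpos, aux_ss_n_sub_one n hnpos,
      aux_cc_mn_sub_one n m hnpos, aux_ss_mn_sub_one n m hnpos,
      aux_cc_two, aux_cc_two_m]
    simp only [mul_one]
    ring
  rw [hbp 0] at hf₀
  have hA : ∀ i : ℤ, B5 f₀ (pp n m x₁ x₂ i) =
      (1 - gg n m x₁ x₂ 1) * Real.sqrt (x₁ + x₂ - 1) +
      Real.sqrt (x₁ + x₂ - 1) *
        (B5 (pp n m x₁ x₂ 0) (pp n m x₁ x₂ i) + B5 (pp n m x₁ x₂ 1) (pp n m x₁ x₂ i)) := by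
    intro i
    rw [hf₀, aux_B5_add_left, aux_B5_smul_left, aux_B5_smul_left, aux_B5_add_left, hbp i]
  have c1 : B5 f₀ (pp n m x₁ x₂ 0) = 0 := by
    rw [hA 0, hself 0, aux_B5_comm (pp n m x₁ x₂ 1) (pp n m x₁ x₂ 0), e01]; ring
  have c2 : B5 f₀ (pp n m x₁ x₂ 1) = 0 := by
    rw [hA 1, hself 1, e01]; ring
  have cfb : B5 f₀ b = (1 - gg n m x₁ x₂ 1) + 2 * (x₁ + x₂ - 1) := by
    rw [hf₀, aux_B5_add_left, aux_B5_smul_left, aux_B5_smul_left, aux_B5_add_left,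
      hbb, aux_B5_comm (pp n m x₁ x₂ 0) b, aux_B5_comm (pp n m x₁ x₂ 1) b, hbp 0, hbp 1]
    nlinarith [ht2]
  have c3 : B5 f₀ f₀ = (1 - gg n m x₁ x₂ 1) ^ 2 +
      2 * (1 - gg n m x₁ x₂ 1) * (x₁ + x₂ - 1) := by
    nth_rewrite 2 [hf₀]
    rw [aux_B5_add_right, aux_B5_smul_right, aux_B5_smul_right, aux_B5_add_right,
      c1, c2, cfb]
    ring
  refine ⟨c1, c2, ?_, ?_, ?_⟩
  · rw [c3, hbp 0, ht2]
  · intro hlt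
    rw [c3]; nlinarith
  · -- rσ f₀ = f₀
    have hfn : B5 f₀ (pp n m x₁ x₂ ((n:ℤ)-1)) =
        Real.sqrt (x₁ + x₂ - 1) * (1 + gg n m x₁ x₂ 2) := by
      rw [hA ((n:ℤ)-1), e0n, e1n]; ring
    have hsub : B5 f₀ (pp n m x₁ x₂ 1 - pp n m x₁ x₂ ((n:ℤ)-1)) =
        -(Real.sqrt (x₁ + x₂ - 1) * (1 + gg n m x₁ x₂ 2)) := by
      rw [aux_B5_sub_right, c2, hfn]; ring
    have hgne : gg n m x₁ x₂ 2 + 1 ≠ 0 := ne_of_gt hg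
    have hcoef : B5 f₀ (pp n m x₁ x₂ 1 - pp n m x₁ x₂ ((n:ℤ)-1)) / (gg n m x₁ x₂ 2 + 1)
        = -Real.sqrt (x₁ + x₂ - 1) := by
      rw [hsub, div_eq_iff hgne]; ring
    unfold rsig sig
    rw [c1, hcoef]
    rw [Matrix.mulVec_add, Matrix.mulVec_add, Matrix.mulVec_smul, Matrix.mulVec_smul,
      Matrix.mulVec_sub]
    have r1 : (rot n m).mulVec (pp n m x₁ x₂ 1) = pp n m x₁ x₂ 2 := by
      rw [aux_rot_pp]; norm_num
    have rn : (rot n m).mulVec (pp n m x₁ x₂ ((n:ℤ)-1)) = pp n m x₁ x₂ 0 := by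
      rw [aux_rot_pp, show ((n:ℤ) - 1 + 1) = (n:ℤ) by ring]
      exact aux_pp_n n m hnpos x₁ x₂
    have r0 : (rot n m).mulVec (pp n m x₁ x₂ 0) = pp n m x₁ x₂ 1 := by
      rw [aux_rot_pp]; norm_num
    have rf : (rot n m).mulVec f₀ = (1 - gg n m x₁ x₂ 1) • b +
        Real.sqrt (x₁ + x₂ - 1) • (pp n m x₁ x₂ 1 + pp n m x₁ x₂ 2) := by
      rw [hf₀, Matrix.mulVec_add, Matrix.mulVec_smul, Matrix.mulVec_smul,
        Matrix.mulVec_add, r0, r1, hb, aux_rot_b]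
    rw [rf, r0, r1, rn, hf₀]
    module
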